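/- arXiv:1412.5726 — 2 statements merged into one kernel-verified Lean document; each statement's English description precedes it below -/
import Mathlib

section
/- Suppose H, α, A, B satisfy equations (E1)–(E7) on I, and suppose in addition that α is constant on I. Then H is constant on I. -/
open Set

theorem alpha_const_imp_H_const (n p : ℕ) (hn : 4 ≤ n) (hp : ((n : ℝ) + 1) / 2 ≤ (p : ℝ)) (hpn : p < n)
    (c : ℝ) (a b : ℝ) (hab : a < b)
    (H α A B lam β : ℝ → ℝ)
    (hH : ContDiffOn ℝ (⊤ : ℕ∞) H (Ioo a b)) (hα : ContDiffOn ℝ (⊤ : ℕ∞) α (Ioo a b))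
    (hA : ContDiffOn ℝ (⊤ : ℕ∞) A (Ioo a b)) (hB : ContDiffOn ℝ (⊤ : ℕ∞) B (Ioo a b))
    (hlam : ∀ t, lam t = -((n : ℝ) / 2) * H t)
    (hβ : ∀ t, β t = ((3 / 2) * (n : ℝ) * H t - ((p : ℝ) - 1) * α t) / ((n : ℝ) - (p : ℝ)))
    (hE1 : ∀ t ∈ Ioo a b, deriv α t = A t * (lam t - α t))
    (hE2 : ∀ t ∈ Ioo a b, deriv β t = B t * (lam t - β t))
    (hE3 : ∀ t ∈ Ioo a b, deriv A t + (A t) ^ 2 = -(lam t * α t) - c)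
    (hE4 : ∀ t ∈ Ioo a b, deriv B t + (B t) ^ 2 = -(lam t * β t) - c)
    (hE5 : ∀ t ∈ Ioo a b, A t * B t = -(α t * β t + c))
    (hE6 : ∀ t ∈ Ioo a b, -(deriv (deriv H) t)
      - (((p : ℝ) - 1) * A t + ((n : ℝ) - (p : ℝ)) * B t) * deriv H t
      + H t * ((lam t) ^ 2 + ((p : ℝ) - 1) * (α t) ^ 2 + ((n : ℝ) - (p : ℝ)) * (β t) ^ 2)
      = (n : ℝ) * c * H t)
    (hE7 : ∀ t ∈ Ioo a b, lam t ≠ α t ∧ lam t ≠ β t ∧ α t ≠ β t)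
    (hαconst : ∀ s ∈ Ioo a b, ∀ t ∈ Ioo a b, α s = α t) :
    ∀ s ∈ Ioo a b, ∀ t ∈ Ioo a b, H s = H t := by
  have so : IsOpen (Ioo a b) := isOpen_Ioo
  have hnn : (0:ℝ) < (n:ℝ) := by positivity
  have hn0 : (n:ℝ) ≠ 0 := hnn.ne'
  set m : ℝ := (n:ℝ) - (p:ℝ) with hm
  have hm1 : (1:ℝ) ≤ m := by
    have : (p:ℝ) + 1 ≤ (n:ℝ) := by exact_mod_cast hpn
    simp [hm]; linarith
  have hm0 : m ≠ 0 := by linarith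
  have hHd : ∀ t ∈ Ioo a b, HasDerivAt H (deriv H t) t := fun t ht =>
    ((hH.differentiableOn (by simp)).differentiableAt (so.mem_nhds ht)).hasDerivAt
  have hαd : ∀ t ∈ Ioo a b, HasDerivAt α (deriv α t) t := fun t ht =>
    ((hα.differentiableOn (by simp)).differentiableAt (so.mem_nhds ht)).hasDerivAt
  have hBd : ∀ t ∈ Ioo a b, HasDerivAt B (deriv B t) t := fun t ht =>
    ((hB.differentiableOn (by simp)).differentiableAt (so.mem_nhds ht)).hasDerivAt
  have hH' : ContDiffOn ℝ (⊤ : ℕ∞) (deriv H) (Ioo a b) := hH.deriv_of_isOpen so (by simp)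
  have hH'd : ∀ t ∈ Ioo a b, HasDerivAt (deriv H) (deriv (deriv H) t) t := fun t ht =>
    ((hH'.differentiableOn (by simp)).differentiableAt (so.mem_nhds ht)).hasDerivAt
  intro x hx y hy
  have hkconst : ∀ t ∈ Ioo a b, α t = α x := fun t ht => hαconst t ht x hx
  have hdα : ∀ t ∈ Ioo a b, deriv α t = 0 := by
    intro t ht
    have h1 : α =ᶠ[nhds t] fun _ => α x :=
      Filter.eventuallyEq_of_mem (so.mem_nhds ht) (fun u hu => hkconst u hu)
    rw [h1.deriv_eq]; exact deriv_const t (α x)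
  have hA0 : ∀ t ∈ Ioo a b, A t = 0 := by
    intro t ht
    have e1 := hE1 t ht
    rw [hdα t ht] at e1
    rcases mul_eq_zero.mp e1.symm with h | h
    · exact h
    · exact absurd (sub_eq_zero.mp h) (hE7 t ht).1
  have hdA : ∀ t ∈ Ioo a b, deriv A t = 0 := by
    intro t ht
    have h1 : A =ᶠ[nhds t] fun _ => 0 :=
      Filter.eventuallyEq_of_mem (so.mem_nhds ht) (fun u hu => hA0 u hu)
    rw [h1.deriv_eq]; exact deriv_const t 0
  by_cases hk : α x = 0
  · -- hard case: constant is zero, derive False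
    exfalso
    have hα0 : ∀ t ∈ Ioo a b, α t = 0 := fun t ht => (hkconst t ht).trans hk
    have hc : c = 0 := by
      have e3 := hE3 x hx
      rw [hA0 x hx, hdA x hx, hα0 x hx] at e3
      simpa using e3.symm
    have hH0 : ∀ t ∈ Ioo a b, H t ≠ 0 := by
      intro t ht h0
      have := (hE7 t ht).1
      rw [hlam t, hα0 t ht, h0] at this
      simp at this
    -- Equation (1): 3 H' = -(m+3) B H
    have eq1 : ∀ t ∈ Ioo a b, 3 * deriv H t + (m + 3) * (B t * H t) = 0 := by
      intro t ht
      have hbd : HasDerivAt β (((3/2) * (n:ℝ) * deriv H t - ((p:ℝ)-1) * deriv α t) / ((n:ℝ)-(p:ℝ))) t := by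
        have : β = fun u => ((3/2) * (n:ℝ) * H u - ((p:ℝ)-1) * α u) / ((n:ℝ)-(p:ℝ)) := funext hβ
        rw [this]
        exact (((hHd t ht).const_mul _).sub ((hαd t ht).const_mul _)).div_const _
      have e2 := hE2 t ht
      rw [hbd.deriv, hdα t ht, hβ t, hlam t, hα0 t ht] at e2
      rw [← hm] at e2
      field_simp at e2
      have e2' : (4 * m * (n:ℝ)) * (3 * deriv H t + (m + 3) * (B t * H t)) = 0 := by
        linear_combination (4 * m) * e2
      have h4 : (4 * m * (n:ℝ)) ≠ 0 := by positivity
      exact (mul_eq_zero.mp e2').resolve_left h4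
    -- Equation (2): 4 m B' + 4 m B^2 = 3 n^2 H^2
    have eq2 : ∀ t ∈ Ioo a b, 4 * m * deriv B t + 4 * m * (B t)^2 - 3 * (n:ℝ)^2 * (H t)^2 = 0 := by
      intro t ht
      have e4 := hE4 t ht
      rw [hβ t, hlam t, hα0 t ht, hc] at e4
      field_simp [hm0] at e4
      linear_combination e4
    -- Equation (3): 4 m H'' + 4 m^2 B H' = n^2 (m+9) H^3
    have eq3 : ∀ t ∈ Ioo a b, 4 * m * deriv (deriv H) t + 4 * m^2 * (B t) * deriv H t
        - (n:ℝ)^2 * (m + 9) * (H t)^3 = 0 := by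
      intro t ht
      have e6 := hE6 t ht
      rw [hβ t, hlam t, hα0 t ht, hA0 t ht, hc] at e6
      field_simp [hm0] at e6
      have e3' : (4 * m) * (4 * m * deriv (deriv H) t + 4 * m^2 * (B t) * deriv H t
          - (n:ℝ)^2 * (m + 9) * (H t)^3) = 0 := by linear_combination (-4 * m) * e6
      have h4 : (4 * m) ≠ 0 := by positivity
      exact (mul_eq_zero.mp e3').resolve_left h4
    -- Equation (4): derivative of eq1
    have eq4 : ∀ t ∈ Ioo a b, 3 * deriv (deriv H) t
        + (m + 3) * (deriv B t * H t + B t * deriv H t) = 0 := by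
      intro t ht
      have hGd : HasDerivAt (fun u => 3 * deriv H u + (m + 3) * (B u * H u))
          (3 * deriv (deriv H) t + (m + 3) * (deriv B t * H t + B t * deriv H t)) t :=
        ((hH'd t ht).const_mul 3).add (((hBd t ht).mul (hHd t ht)).const_mul _)
      have hz : (fun u => 3 * deriv H u + (m + 3) * (B u * H u)) =ᶠ[nhds t] fun _ => (0:ℝ) :=
        Filter.eventuallyEq_of_mem (so.mem_nhds ht) (fun u hu => eq1 u hu)
      have := hGd.deriv
      rw [hz.deriv_eq, deriv_const] at this
      exact this.symm
    -- Equation (6): 12 m (3-m) H'^2 = 3 n^2 (m+6)(m+3) H^4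
    have eq6 : ∀ t ∈ Ioo a b, 12 * m * (3 - m) * (deriv H t)^2
        - 3 * (n:ℝ)^2 * (m + 6) * (m + 3) * (H t)^4 = 0 := by
      intro t ht
      linear_combination (-2*m*(m+3)*H t) * eq4 t ht + ((3/2)*(m+3)*H t) * eq3 t ht
        + ((1/2)*(m+3)^2*(H t)^2) * eq2 t ht
        + ((12*m - 4*m^2) * deriv H t - 2*m*(m+3)*(B t * H t)) * eq1 t ht
    have hx4 : (0:ℝ) < (H x)^4 :=
      lt_of_le_of_ne (by positivity) (Ne.symm (pow_ne_zero 4 (hH0 x hx)))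
    have hnn2 : (0:ℝ) < (n:ℝ)^2 := by positivity
    by_cases hm3 : 3 ≤ m
    · -- m ≥ 3 : direct contradiction from eq6 at x
      have h6 := eq6 x hx
      have h31 : 12 * m * (3 - m) ≤ 0 := by nlinarith
      have hneg : 12 * m * (3 - m) * (deriv H x)^2 ≤ 0 :=
        mul_nonpos_of_nonpos_of_nonneg h31 (sq_nonneg _)
      have hpos : (0:ℝ) < 3 * (n:ℝ)^2 * (m + 6) * (m + 3) * (H x)^4 :=
        mul_pos (mul_pos (mul_pos (by positivity) (by linarith : (0:ℝ) < m + 6)) (by linarith : (0:ℝ) < m + 3)) hx4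
      linarith
    · push_neg at hm3
      -- H' never vanishes
      have hh1 : deriv H x ≠ 0 := by
        intro h0
        have h6 := eq6 x hx
        rw [h0] at h6
        nlinarith [mul_pos (mul_pos (mul_pos hnn2 (by linarith : (0:ℝ) < m + 6)) (by linarith : (0:ℝ) < m + 3)) hx4]
      -- derivative of eq6
      have hPd : HasDerivAt (fun u => 12 * m * (3 - m) * (deriv H u)^2
            - 3 * (n:ℝ)^2 * (m + 6) * (m + 3) * (H u)^4)
          (12 * m * (3 - m) * (2 * deriv H x ^ 1 * deriv (deriv H) x)
            - 3 * (n:ℝ)^2 * (m + 6) * (m + 3) * (4 * H x ^ 3 * deriv H x)) x :=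
        (((hH'd x hx).pow 2).const_mul _).sub (((hHd x hx).pow 4).const_mul _)
      have hPz : (fun u => 12 * m * (3 - m) * (deriv H u)^2
            - 3 * (n:ℝ)^2 * (m + 6) * (m + 3) * (H u)^4) =ᶠ[nhds x] fun _ => (0:ℝ) :=
        Filter.eventuallyEq_of_mem (so.mem_nhds hx) (fun u hu => eq6 u hu)
      have hdP := hPd.deriv
      rw [hPz.deriv_eq, deriv_const] at hdP
      have f7 : 2 * m * (3 - m) * deriv (deriv H) x
          - (n:ℝ)^2 * (m + 6) * (m + 3) * (H x)^3 = 0 := by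
        have hmul : (2 * m * (3 - m) * deriv (deriv H) x
            - (n:ℝ)^2 * (m + 6) * (m + 3) * (H x)^3) * deriv H x = 0 * deriv H x := by
          rw [zero_mul]
          linear_combination (-(1/12)) * hdP
        exact mul_right_cancel₀ hh1 hmul
      have key : 3 * (n:ℝ)^2 * (m + 3) * (6 * m + 9) * (H x)^4 = 0 := by
        linear_combination ((3 - m)*4*m*(m+3)*H x) * eq4 x hx
          + (-(3 - m)*(m+3)^2*(H x)^2) * eq2 x hx
          + ((3 - m)*(-4*m*(m+6)*deriv H x + 4*m*(m+3)*(B x * H x))) * eq1 x hx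
          + (m + 6) * eq6 x hx + (-6*(m+3)*H x) * f7
      nlinarith [mul_pos (mul_pos (mul_pos (by positivity : (0:ℝ) < 3 * (n:ℝ)^2) (by linarith : (0:ℝ) < m + 3)) (by linarith : (0:ℝ) < 6 * m + 9)) hx4]
  · -- easy case
    have hval : ∀ t ∈ Ioo a b, H t = 2 * c / ((n:ℝ) * α x) := by
      intro t ht
      have e3 := hE3 t ht
      rw [hA0 t ht, hdA t ht, hkconst t ht, hlam t] at e3
      field_simp at e3 ⊢
      linear_combination -e3
    rw [hval x hx, hval y hy]
end

section
/- (Algebraic elimination in Case B, n - p = 1: combining equations (3.25) and (3.26) yields (n-2)·H·(3nH - 2(n-1)α)² = 0.) Let n ≥ 4 be an integer and let H, α, E, Y be real numbers. Set λ₁ := -(n/2)·H and λₙ := (3/2)·n·H - (n-2)·α, and assume λ₁ ≠ λₙ, λ₁ ≠ α and λₙ ≠ α. Suppose that (2/(λ₁-λₙ))·(Y/(λ₁-λₙ) - α/(λ₁-α))·E + H·(-3nH + 2(n-1)α) = 0 and ((2n(4-n)·H + 2(n-2)(n-1)·α)/((λ₁-λₙ)·(λₙ-α)))·(Y/(λ₁-λₙ)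 - α/(λ₁-α))·E + H·((-7n+10)·n·H + 4(n-1)(n-2)·α) = 0. Then (n-2)·H·(3nH - 2(n-1)α)² = 0. -/
/-!
Write `S = (Y/(λ₁-λₙ) - α/(λ₁-α))·E` and `Q = 3nH - 2(n-1)α`. Since `λₙ - α = Q/2`, equation
(3.25) gives `S = (λ₁-λₙ)(λₙ-α)·H`, so in (3.26) both denominators cancel and the numerator `c`
of its coefficient simply adds to the bracket `r` multiplying `H`: `H·(c + r) = 0`, and
`c + r = -3(n-2)·Q`.
-/

theorem mul_add_eq_zero_of_shared_coefficient {K : Type*} [Field K] [NeZero (2 : K)]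
    {d e p c r H S : K} (hd : d ≠ 0) (he : e ≠ 0) (hp : p + 2 * e = 0)
    (e1 : 2 / d * S + H * p = 0) (e2 : c / (d * e) * S + H * r = 0) :
    H * (c + r) = 0 := by
  have hS : S = d * H * e := by
    field_simp at e1
    refine mul_left_cancel₀ (two_ne_zero (α := K)) ?_
    linear_combination e1 - d * H * hp
  rw [hS] at e2
  field_simp at e2
  linear_combination e2

theorem caseB_elimination_general (n : ℕ) (H α E Y lam1 lamn : ℝ)
    (hlamn : lamn = (3 / 2) * (n : ℝ) * H - ((n : ℝ) - 2) * α)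
    (h1 : lam1 ≠ lamn) (h3 : lamn ≠ α)
    (e1 : (2 / (lam1 - lamn)) * (Y / (lam1 - lamn) - α / (lam1 - α)) * E
        + H * (-3 * (n : ℝ) * H + 2 * ((n : ℝ) - 1) * α) = 0)
    (e2 : ((2 * (n : ℝ) * (4 - (n : ℝ)) * H + 2 * ((n : ℝ) - 2) * ((n : ℝ) - 1) * α)
            / ((lam1 - lamn) * (lamn - α)))
          * (Y / (lam1 - lamn) - α / (lam1 - α)) * E
        + H * ((-7 * (n : ℝ) + 10) * (n : ℝ) * H + 4 * ((n : ℝ) - 1) * ((n : ℝ) - 2) * α) = 0) :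
    ((n : ℝ) - 2) * H * (3 * (n : ℝ) * H - 2 * ((n : ℝ) - 1) * α) ^ 2 = 0 := by
  have hgap : -3 * (n : ℝ) * H + 2 * ((n : ℝ) - 1) * α + 2 * (lamn - α) = 0 := by
    rw [hlamn]; ring
  simp only [mul_assoc _ (Y / _ - _) E] at e1 e2
  have hsum := mul_add_eq_zero_of_shared_coefficient (sub_ne_zero.mpr h1) (sub_ne_zero.mpr h3)
    hgap e1 e2
  linear_combination (-(3 * (n : ℝ) * H - 2 * ((n : ℝ) - 1) * α) / 3) * hsum

theorem caseB_elimination (n : ℕ) (hn : 4 ≤ n) (H α E Y lam1 lamn : ℝ)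
    (hlam1 : lam1 = -((n : ℝ) / 2) * H)
    (hlamn : lamn = (3 / 2) * (n : ℝ) * H - ((n : ℝ) - 2) * α)
    (h1 : lam1 ≠ lamn) (h2 : lam1 ≠ α) (h3 : lamn ≠ α)
    (e1 : (2 / (lam1 - lamn)) * (Y / (lam1 - lamn) - α / (lam1 - α)) * E
        + H * (-3 * (n : ℝ) * H + 2 * ((n : ℝ) - 1) * α) = 0)
    (e2 : ((2 * (n : ℝ) * (4 - (n : ℝ)) * H + 2 * ((n : ℝ) - 2) * ((n : ℝ) - 1) * α)
            / ((lam1 - lamn) * (lamn - α)))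
          * (Y / (lam1 - lamn) - α / (lam1 - α)) * E
        + H * ((-7 * (n : ℝ) + 10) * (n : ℝ) * H + 4 * ((n : ℝ) - 1) * ((n : ℝ) - 2) * α) = 0) :
    ((n : ℝ) - 2) * H * (3 * (n : ℝ) * H - 2 * ((n : ℝ) - 1) * α) ^ 2 = 0 :=
  caseB_elimination_general n H α E Y lam1 lamn hlamn h1 h3 e1 e2
end
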